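/- arXiv:1303.1744 — 2 statements merged into one kernel-verified Lean document; each statement's English description precedes it below -/
import Mathlib

section
/- The current of transition paths is divergence free (equations (1.33)–(1.34) of the paper): Let Θ ⊆ ℝ^d be open. Suppose that on Θ the stationarity identity Σ_{i,j} ∂_i∂_j(a_{ij}ρ) = Σ_i ∂_i(b_i ρ) holds, that q: ℝ^d → ℝ is C² on Θ with Lq = 0 on Θ, and that q̃: ℝ^d → ℝ is C² on Θ with L̃q̃ = 0 on Θ. Then the vector field J_R(z) = ( b(z)ρ(z) − div(aρ)(z) ) q(z) q̃(z) + ρ(z) a(z) ( q̃(z)∇q(z) − q(z)∇q̃(z) ) satisfies ∇·J_R(z) = Σ_{j=1}^d ∂_j (J_R)_j (z) = 0 for every z ∈ Θ. -/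
open scoped BigOperators
open Set

/-- Partial derivative `∂ᵢ u (x)` on `ℝ^d = (Fin d → ℝ)`. -/
noncomputable def pd {d : ℕ} (i : Fin d) (u : (Fin d → ℝ) → ℝ) (x : Fin d → ℝ) : ℝ :=
  fderiv ℝ u x (Pi.single i 1)

/-- The elliptic operator `L u = ∑ᵢⱼ aᵢⱼ ∂ᵢ∂ⱼ u + ∑ᵢ bᵢ ∂ᵢ u`. -/
noncomputable def Lop {d : ℕ} (a : (Fin d → ℝ) → Fin d → Fin d → ℝ)
    (b : (Fin d → ℝ) → Fin d → ℝ) (u : (Fin d → ℝ) → ℝ) (x : Fin d → ℝ) : ℝ :=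
  (∑ i, ∑ j, a x i j * pd i (pd j u) x) + ∑ i, b x i * pd i u x

/-- The formal adjoint of `L` in `L²(ℝ^d, ρ dx)`. -/
noncomputable def Ltil {d : ℕ} (a : (Fin d → ℝ) → Fin d → Fin d → ℝ)
    (b : (Fin d → ℝ) → Fin d → ℝ) (ρ : (Fin d → ℝ) → ℝ)
    (u : (Fin d → ℝ) → ℝ) (x : Fin d → ℝ) : ℝ :=
  -(∑ i, b x i * pd i u x)
    + (2 / ρ x) * ∑ j, (∑ i, pd i (fun y => a y i j * ρ y) x) * pd j u x
    + ∑ i, ∑ j, a x i j * pd i (pd j u) x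

/-- The current of transition paths
`J_R = (bρ - div(aρ)) q q̃ + ρ a (q̃ ∇q - q ∇q̃)` (its `j`-th component). -/
noncomputable def JR {d : ℕ} (a : (Fin d → ℝ) → Fin d → Fin d → ℝ)
    (b : (Fin d → ℝ) → Fin d → ℝ) (ρ : (Fin d → ℝ) → ℝ)
    (q qt : (Fin d → ℝ) → ℝ) (z : Fin d → ℝ) (j : Fin d) : ℝ :=
  (b z j * ρ z - ∑ i, pd i (fun y => a y i j * ρ y) z) * (q z * qt z)
    + ρ z * ∑ i, a z j i * (qt z * pd i q z - q z * pd i qt z)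

/-!
Expanding `∇ · J_R` by the product rule and regrouping gives
`∇ · J_R = q̃ ρ L q - q ρ L̃ q̃ + q q̃ (∇ · (bρ) - ∑ᵢⱼ ∂ᵢ∂ⱼ(aᵢⱼρ))` plus two remainders that
vanish because `aρ` is symmetric: the first-order terms `ρ aⱼᵢ (∂ᵢq ∂ⱼq̃ - ∂ᵢq̃ ∂ⱼq)` are
antisymmetric in `(i, j)`, and the derivatives of `aρ` falling on `q̃ ∇q - q ∇q̃` reproduce
`div(aρ) · (q̃ ∇q - q ∇q̃)`. The factor `2` in `L̃` absorbs the leftover `div(aρ)` terms.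
-/

section PartialDerivative

variable {d : ℕ} {f g : (Fin d → ℝ) → ℝ} {x : Fin d → ℝ}

lemma pd_add (j : Fin d) (hf : DifferentiableAt ℝ f x) (hg : DifferentiableAt ℝ g x) :
    pd j (fun y => f y + g y) x = pd j f x + pd j g x := by
  simp [pd, fderiv_fun_add hf hg]

lemma pd_sub (j : Fin d) (hf : DifferentiableAt ℝ f x) (hg : DifferentiableAt ℝ g x) :
    pd j (fun y => f y - g y) x = pd j f x - pd j g x := by
  simp [pd, fderiv_fun_sub hf hg]

lemma pd_mul (j : Fin d) (hf : DifferentiableAt ℝ f x) (hg : DifferentiableAt ℝ g x) :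
    pd j (fun y => f y * g y) x = f x * pd j g x + g x * pd j f x := by
  simp [pd, fderiv_fun_mul hf hg]

lemma pd_sum {ι : Type*} (s : Finset ι) {F : ι → (Fin d → ℝ) → ℝ} (j : Fin d)
    (hF : ∀ i ∈ s, DifferentiableAt ℝ (F i) x) :
    pd j (fun y => ∑ i ∈ s, F i y) x = ∑ i ∈ s, pd j (F i) x := by
  simp [pd, fderiv_fun_sum hF]

lemma ContDiffAt.pd {n : WithTop ℕ∞} (hf : ContDiffAt ℝ (n + 1) f x) (i : Fin d) :
    ContDiffAt ℝ n (pd i f) x :=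
  (hf.fderiv_right le_rfl).clm_apply contDiffAt_const

end PartialDerivative

lemma Finset.sum_sum_eq_zero_of_antisymm {ι M : Type*} [AddCommGroup M] [IsAddTorsionFree M]
    (s : Finset ι) {f : ι → ι → M} (hf : ∀ i j, f i j = -f j i) :
    ∑ i ∈ s, ∑ j ∈ s, f i j = 0 := by
  refine self_eq_neg.mp ?_
  conv_lhs => rw [Finset.sum_comm]
  rw [← Finset.sum_neg_distrib]
  exact Finset.sum_congr rfl fun j _ => by
    rw [← Finset.sum_neg_distrib]
    exact Finset.sum_congr rfl fun i _ => hf i j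

section Current

open Finset

variable {d : ℕ} {a : (Fin d → ℝ) → Fin d → Fin d → ℝ} {b : (Fin d → ℝ) → Fin d → ℝ}
  {ρ q qt u : (Fin d → ℝ) → ℝ} {x z : Fin d → ℝ}

lemma mul_Lop :
    ρ x * Lop a b u x =
      ∑ j, (∑ i, a x j i * ρ x * pd j (pd i u) x + b x j * ρ x * pd j u x) := by
  simp only [Lop, mul_add, mul_sum, sum_add_distrib]
  congr 1 <;> refine sum_congr rfl fun j _ => ?_
  · exact sum_congr rfl fun i _ => by ring
  · ring

lemma mul_Ltil (hρ : ρ x ≠ 0) :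
    ρ x * Ltil a b ρ u x =
      ∑ j, (-(b x j * ρ x * pd j u x) + 2 * (∑ i, pd i (fun y => a y i j * ρ y) x) * pd j u x
        + ∑ i, a x j i * ρ x * pd j (pd i u) x) := by
  rw [Ltil, mul_add, mul_add, ← mul_assoc, mul_div_cancel₀ _ hρ]
  rw [mul_neg, mul_sum, mul_sum, mul_sum, ← sum_neg_distrib, ← sum_add_distrib, ← sum_add_distrib]
  refine sum_congr rfl fun j _ => ?_
  congr 1
  · ring
  · rw [mul_sum]
    exact sum_congr rfl fun i _ => by ring

lemma pd_JR_eq (ha : ContDiffAt ℝ 2 a z) (hb : DifferentiableAt ℝ b z) (hρ : ContDiffAt ℝ 2 ρ z)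
    (hq : ContDiffAt ℝ 2 q z) (hqt : ContDiffAt ℝ 2 qt z) (j : Fin d) :
    pd j (fun y => JR a b ρ q qt y j) z =
      (pd j (fun y => b y j * ρ y) z - ∑ i, pd j (pd i (fun y => a y i j * ρ y)) z)
          * (q z * qt z)
        + (b z j * ρ z - ∑ i, pd i (fun y => a y i j * ρ y) z)
          * (q z * pd j qt z + qt z * pd j q z)
        + ∑ i, (a z j i * ρ z
            * (qt z * pd j (pd i q) z + pd i q z * pd j qt z
              - (q z * pd j (pd i qt) z + pd i qt z * pd j q z))
          + (qt z * pd i q z - q z * pd i qt z) * pd j (fun y => a y j i * ρ y) z) := by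
  have hg : ∀ i j, ContDiffAt ℝ 2 (fun y => a y i j * ρ y) z := fun i j =>
    (contDiffAt_pi.mp (contDiffAt_pi.mp ha i) j).mul hρ
  have hgd : ∀ i j, DifferentiableAt ℝ (fun y => a y i j * ρ y) z := fun i j =>
    (hg i j).differentiableAt two_ne_zero
  have hdivd : DifferentiableAt ℝ (fun y => ∑ i, pd i (fun y => a y i j * ρ y) y) z :=
    .fun_sum fun i _ => ((hg i j).pd i).differentiableAt one_ne_zero
  have hβd : DifferentiableAt ℝ (fun y => b y j * ρ y) z :=
    (differentiableAt_pi.mp hb j).mul (hρ.differentiableAt two_ne_zero)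
  have hqd := hq.differentiableAt two_ne_zero
  have hqtd := hqt.differentiableAt two_ne_zero
  have hpqd : ∀ i, DifferentiableAt ℝ (pd i q) z := fun i => (hq.pd i).differentiableAt one_ne_zero
  have hpqtd : ∀ i, DifferentiableAt ℝ (pd i qt) z := fun i =>
    (hqt.pd i).differentiableAt one_ne_zero
  have hwd : ∀ i, DifferentiableAt ℝ (fun y => qt y * pd i q y - q y * pd i qt y) z := fun i =>
    (hqtd.fun_mul (hpqd i)).fun_sub (hqd.fun_mul (hpqtd i))
  have hJ : (fun y => JR a b ρ q qt y j) = fun y =>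
      (b y j * ρ y - ∑ i, pd i (fun y => a y i j * ρ y) y) * (q y * qt y)
        + ∑ i, a y j i * ρ y * (qt y * pd i q y - q y * pd i qt y) := by
    funext y
    rw [JR, mul_sum]
    congr 1
    exact sum_congr rfl fun i _ => by ring
  rw [hJ, pd_add j ((hβd.fun_sub hdivd).fun_mul (hqd.fun_mul hqtd))
      (.fun_sum fun i _ => (hgd j i).fun_mul (hwd i)),
    pd_mul j (hβd.fun_sub hdivd) (hqd.fun_mul hqtd), pd_sub j hβd hdivd, pd_mul j hqd hqtd,
    pd_sum _ j fun i _ => ((hg i j).pd i).differentiableAt one_ne_zero,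
    pd_sum _ j fun i _ => (hgd j i).fun_mul (hwd i)]
  congr 1
  · ring
  · refine sum_congr rfl fun i _ => ?_
    rw [pd_mul j (hgd j i) (hwd i), pd_sub j (hqtd.fun_mul (hpqd i)) (hqd.fun_mul (hpqtd i)),
      pd_mul j hqtd (hpqd i), pd_mul j hqd (hpqtd i)]

lemma pd_JR_eq_regrouped (ha : ContDiffAt ℝ 2 a z) (hb : DifferentiableAt ℝ b z)
    (hρ : ContDiffAt ℝ 2 ρ z) (hq : ContDiffAt ℝ 2 q z) (hqt : ContDiffAt ℝ 2 qt z) (j : Fin d) :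
    pd j (fun y => JR a b ρ q qt y j) z =
      qt z * (∑ i, a z j i * ρ z * pd j (pd i q) z + b z j * ρ z * pd j q z)
      - q z * (-(b z j * ρ z * pd j qt z)
          + 2 * (∑ i, pd i (fun y => a y i j * ρ y) z) * pd j qt z
          + ∑ i, a z j i * ρ z * pd j (pd i qt) z)
      + q z * qt z * (pd j (fun y => b y j * ρ y) z - ∑ i, pd j (pd i (fun y => a y i j * ρ y)) z)
      + (∑ i, (qt z * pd i q z - q z * pd i qt z) * pd j (fun y => a y j i * ρ y) z
          - (qt z * pd j q z - q z * pd j qt z) * ∑ i, pd i (fun y => a y i j * ρ y) z)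
      + ∑ i, a z j i * ρ z * (pd i q z * pd j qt z - pd i qt z * pd j q z) := by
  rw [pd_JR_eq ha hb hρ hq hqt]
  -- keeps `simp` from distributing the factor `2` of `L̃` over this sum
  generalize ∑ i, pd i (fun y => a y i j * ρ y) z = m
  simp only [mul_add, mul_sub, sub_mul, mul_sum, sum_mul, sum_add_distrib, sum_sub_distrib]
  ring_nf

lemma sum_pd_JR (ha : ContDiffAt ℝ 2 a z) (ha_symm : ∀ x i j, a x i j = a x j i)
    (hb : DifferentiableAt ℝ b z) (hρ : ContDiffAt ℝ 2 ρ z) (hρz : ρ z ≠ 0)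
    (hq : ContDiffAt ℝ 2 q z) (hqt : ContDiffAt ℝ 2 qt z) :
    ∑ j, pd j (fun y => JR a b ρ q qt y j) z =
      qt z * (ρ z * Lop a b q z) - q z * (ρ z * Ltil a b ρ qt z)
        + q z * qt z * (∑ i, pd i (fun y => b y i * ρ y) z
          - ∑ i, ∑ j, pd i (pd j (fun y => a y i j * ρ y)) z) := by
  have hstat_symm : ∑ j, ∑ i, pd j (pd i (fun y => a y i j * ρ y)) z
      = ∑ i, ∑ j, pd i (pd j (fun y => a y i j * ρ y)) z :=
    sum_congr rfl fun j _ => sum_congr rfl fun i _ => by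
      rw [show (fun y => a y i j * ρ y) = fun y => a y j i * ρ y from
        funext fun y => by rw [ha_symm]]
  have hdiv : ∑ j, (∑ i, (qt z * pd i q z - q z * pd i qt z) * pd j (fun y => a y j i * ρ y) z
      - (qt z * pd j q z - q z * pd j qt z) * ∑ i, pd i (fun y => a y i j * ρ y) z) = 0 := by
    rw [sum_sub_distrib, sub_eq_zero, sum_comm]
    simp only [mul_sum]
  have hcross : ∑ j, ∑ i, a z j i * ρ z * (pd i q z * pd j qt z - pd i qt z * pd j q z) = 0 :=
    sum_sum_eq_zero_of_antisymm _ fun j i => by rw [ha_symm]; ring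
  rw [sum_congr rfl fun j _ => pd_JR_eq_regrouped ha hb hρ hq hqt j, mul_Lop, mul_Ltil hρz]
  simp only [sum_add_distrib, sum_sub_distrib, ← mul_sum, hdiv, hcross, hstat_symm,
    add_zero]

end Current

theorem current_divergence_free_general {d : ℕ}
    (a : (Fin d → ℝ) → Fin d → Fin d → ℝ) (b : (Fin d → ℝ) → Fin d → ℝ)
    (ρ : (Fin d → ℝ) → ℝ)
    (ha : ContDiff ℝ 2 a) (ha_symm : ∀ x i j, a x i j = a x j i)
    (hb : ContDiff ℝ 1 b)
    (hρ : ContDiff ℝ 2 ρ) (hρ_pos : ∀ x, 0 < ρ x)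
    (Θ : Set (Fin d → ℝ)) (hΘ : IsOpen Θ)
    (hstat : ∀ x ∈ Θ,
      ∑ i, ∑ j, pd i (pd j (fun y => a y i j * ρ y)) x
        = ∑ i, pd i (fun y => b y i * ρ y) x)
    (q qt : (Fin d → ℝ) → ℝ)
    (hq : ContDiffOn ℝ 2 q Θ) (hLq : ∀ x ∈ Θ, Lop a b q x = 0)
    (hqt : ContDiffOn ℝ 2 qt Θ) (hLqt : ∀ x ∈ Θ, Ltil a b ρ qt x = 0) :
    ∀ z ∈ Θ, ∑ j, pd j (fun y => JR a b ρ q qt y j) z = 0 := by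
  intro z hz
  have hΘz : Θ ∈ nhds z := hΘ.mem_nhds hz
  rw [sum_pd_JR ha.contDiffAt ha_symm (hb.differentiable one_ne_zero z) hρ.contDiffAt
    (hρ_pos z).ne' (hq.contDiffAt hΘz) (hqt.contDiffAt hΘz), hLq z hz, hLqt z hz, hstat z hz]
  ring

/-- The current of transition paths is divergence free on `Θ`. -/
theorem current_divergence_free {d : ℕ} (hd : 1 ≤ d)
    (a : (Fin d → ℝ) → Fin d → Fin d → ℝ) (b : (Fin d → ℝ) → Fin d → ℝ)
    (ρ : (Fin d → ℝ) → ℝ)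
    (ha : ContDiff ℝ 2 a) (ha_symm : ∀ x i j, a x i j = a x j i)
    (hb : ContDiff ℝ 1 b)
    (hρ : ContDiff ℝ 2 ρ) (hρ_pos : ∀ x, 0 < ρ x)
    (Θ : Set (Fin d → ℝ)) (hΘ : IsOpen Θ)
    (hstat : ∀ x ∈ Θ,
      ∑ i, ∑ j, pd i (pd j (fun y => a y i j * ρ y)) x
        = ∑ i, pd i (fun y => b y i * ρ y) x)
    (q qt : (Fin d → ℝ) → ℝ)
    (hq : ContDiffOn ℝ 2 q Θ) (hLq : ∀ x ∈ Θ, Lop a b q x = 0)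
    (hqt : ContDiffOn ℝ 2 qt Θ) (hLqt : ∀ x ∈ Θ, Ltil a b ρ qt x = 0) :
    ∀ z ∈ Θ, ∑ j, pd j (fun y => JR a b ρ q qt y j) z = 0 :=
  current_divergence_free_general a b ρ ha ha_symm hb hρ hρ_pos Θ hΘ hstat q qt hq hLq hqt hLqt
end

section
/- Small-time asymptotics of the transition-path ODE solution (the asymptotic claim at the end of the Remark following the proof of Theorem 1): In the setting of the time-change construction — a, b: ℝ^d → ℝ^{d×d}, ℝ^d continuous, q: ℝ^d → ℝ C¹ with the gradient ∇q continuous at y₀, z: [0,T] → ℝ^d a C¹ curve with z(0) = y₀, z'(s) = 2a(z(s))∇q(z(s)) + q(z(s))b(z(s)), q(y₀) = 0, q(z(s)) > 0 for s ∈ (0,T], and ⟨∇q(y₀), a(y₀)∇q(y₀)⟩ > 0 — let F(t) = ∫₀ᵗ q(z(s)) ds and Ȳ = z ∘ F⁻¹ on [0, F(T)]. Then lim_{t → 0⁺} ( Ȳ(t) − y₀ ) / √t = 2 a(y₀) ∇q(y₀) / ⟨∇q(y₀), a(y₀)∇q(y₀)⟩^{1/2}; that is, Ȳ(t) ∼ y₀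 + 2√t · a(y₀)∇q(y₀)/⟨∇q(y₀), a(y₀)∇q(y₀)⟩^{1/2} as t → 0⁺. -/
open scoped BigOperators
open Set

/-!
Write `c = ⟨∇q(y₀), a(y₀)∇q(y₀)⟩` and `v = 2a(y₀)∇q(y₀) = z'(0)`. Since `q(y₀) = 0`, the function
`s ↦ q(z(s))` vanishes at `0` with right derivative `⟨∇q(y₀), v⟩ = 2c`, so by L'Hôpital
`F(t) ∼ c t²`. Inverting this, `F⁻¹(u) ∼ √(u / c)`, and `Ȳ(u) - y₀ = z(F⁻¹(u)) - z(0) ∼ F⁻¹(u) v`.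
-/

open Filter Topology

theorem fderiv_apply_eq_sum_pd {d : ℕ} (u : (Fin d → ℝ) → ℝ) (x v : Fin d → ℝ) :
    fderiv ℝ u x v = ∑ i, v i * pd i u x := by
  conv_lhs => rw [← Finset.univ_sum_single v]
  refine (map_sum _ _ _).trans (Finset.sum_congr rfl fun i _ => ?_)
  rw [pd, ← smul_eq_mul, ← map_smul, ← Pi.single_smul', smul_eq_mul, mul_one]

theorem fderiv_apply_drift_of_eq_zero {d : ℕ} {q : (Fin d → ℝ) → ℝ} {y : Fin d → ℝ}
    (hq : q y = 0) (A : Fin d → Fin d → ℝ) (β : Fin d → ℝ) :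
    fderiv ℝ q y (fun i => 2 * (∑ j, A i j * pd j q y) + q y * β i) =
      2 * ∑ i, ∑ j, pd i q y * A i j * pd j q y := by
  simp only [fderiv_apply_eq_sum_pd, hq, zero_mul, add_zero, Finset.mul_sum, Finset.sum_mul]
  exact Finset.sum_congr rfl fun i _ => Finset.sum_congr rfl fun j _ => by ring

section Primitive

variable {g : ℝ → ℝ} {T : ℝ}

theorem hasDerivAt_primitive_of_continuousOn (hg : ContinuousOn g (Icc 0 T)) {t : ℝ}
    (ht : t ∈ Ioo 0 T) : HasDerivAt (fun t => ∫ s in (0 : ℝ)..t, g s) (g t) t :=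
  intervalIntegral.integral_hasDerivAt_right
    ((hg.mono (Icc_subset_Icc_right ht.2.le)).intervalIntegrable_of_Icc ht.1.le)
    ((hg.mono Ioo_subset_Icc_self).stronglyMeasurableAtFilter isOpen_Ioo t ht)
    ((hg.mono Ioo_subset_Icc_self).continuousAt (isOpen_Ioo.mem_nhds ht))

theorem continuousOn_primitive_of_continuousOn (hT : 0 ≤ T) (hg : ContinuousOn g (Icc 0 T)) :
    ContinuousOn (fun t => ∫ s in (0 : ℝ)..t, g s) (Icc 0 T) := by
  rw [← uIcc_of_le hT] at hg ⊢
  exact intervalIntegral.continuousOn_primitive_interval hg.integrableOn_uIcc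

theorem strictMonoOn_primitive (hT : 0 ≤ T) (hg : ContinuousOn g (Icc 0 T))
    (hpos : ∀ s ∈ Ioo 0 T, 0 < g s) :
    StrictMonoOn (fun t => ∫ s in (0 : ℝ)..t, g s) (Icc 0 T) := by
  refine strictMonoOn_of_deriv_pos (convex_Icc 0 T)
    (continuousOn_primitive_of_continuousOn hT hg) fun t ht => ?_
  rw [interior_Icc] at ht
  rw [(hasDerivAt_primitive_of_continuousOn hg ht).deriv]
  exact hpos t ht

theorem tendsto_primitive_div_sq (hT : 0 < T) (hg : ContinuousOn g (Icc 0 T)) (hg0 : g 0 = 0)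
    {m : ℝ} (hm : HasDerivWithinAt g m (Icc 0 T) 0) :
    Tendsto (fun t => (∫ s in (0 : ℝ)..t, g s) / t ^ 2) (𝓝[>] 0) (𝓝 (m / 2)) := by
  refine HasDerivAt.lhopital_zero_right_on_Ioo hT
    (fun t ht => hasDerivAt_primitive_of_continuousOn hg ht)
    (fun t _ => by simpa using hasDerivAt_pow 2 t) (fun t ht => by simp [ht.1.ne'])
    ?_ ?_ ?_
  · have h := (continuousOn_primitive_of_continuousOn hT.le hg 0 ⟨le_rfl, hT.le⟩).tendsto
    simp only [intervalIntegral.integral_same] at h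
    exact h.mono_left (nhdsWithin_le_of_mem (Icc_mem_nhdsGT hT))
  · have h : Tendsto (fun t : ℝ => t ^ 2) (𝓝 0) (𝓝 0) := by
      simpa using (continuous_pow 2).tendsto (0 : ℝ)
    exact h.mono_left nhdsWithin_le_nhds
  · have h := (hasDerivWithinAt_iff_tendsto_slope.mp hm).div_const 2
    rw [Icc_sdiff_left] at h
    refine (h.mono_left (nhdsWithin_le_of_mem (Ioc_mem_nhdsGT hT))).congr fun t => ?_
    simp only [slope_def_field, hg0, sub_zero]
    ring

end Primitive

theorem tendsto_nhdsWithin_Ioc_of_rightInvOn {F G : ℝ → ℝ} {T : ℝ} (hT : 0 < T) (hF0 : F 0 = 0)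
    (hF : StrictMonoOn F (Icc 0 T)) (hFc : ContinuousOn F (Icc 0 T))
    (hGF : ∀ t ∈ Icc 0 T, G (F t) = t) (hFG : ∀ u ∈ Icc 0 (F T), F (G u) = u) :
    Tendsto G (𝓝[>] 0) (𝓝[Ioc 0 T] 0) := by
  have hFT : 0 < F T := hF0 ▸ hF ⟨le_rfl, hT.le⟩ ⟨hT.le, le_rfl⟩ hT
  have himage : G '' Icc 0 (F T) = Icc 0 T := by
    refine Subset.antisymm ?_ fun t ht => ⟨F t, ?_, hGF t ht⟩
    · rintro _ ⟨u, hu, rfl⟩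
      obtain ⟨t, ht, rfl⟩ := intermediate_value_Icc hT.le hFc (hF0.symm ▸ hu)
      rwa [hGF t ht]
    · exact ⟨hF0 ▸ hF.monotoneOn ⟨le_rfl, hT.le⟩ ht ht.1,
        hF.monotoneOn ht ⟨hT.le, le_rfl⟩ ht.2⟩
  have hG_mem : MapsTo G (Icc 0 (F T)) (Icc 0 T) := fun u hu => himage ▸ mem_image_of_mem G hu
  have hG0 : G 0 = 0 := by simpa [hF0] using hGF 0 ⟨le_rfl, hT.le⟩
  have hGmono : MonotoneOn G (Icc 0 (F T)) := fun u hu v hv huv =>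
    (hF.le_iff_le (hG_mem hu) (hG_mem hv)).1 (by rwa [hFG u hu, hFG v hv])
  have hGcont : ContinuousWithinAt G (Ici 0) 0 :=
    continuousWithinAt_right_of_monotoneOn_of_image_mem_nhdsWithin hGmono (Icc_mem_nhdsGE hFT)
      (by rw [himage, hG0]; exact Icc_mem_nhdsGE hT)
  have hG_tendsto : Tendsto G (𝓝[>] 0) (𝓝 0) := by
    simpa only [hG0] using hGcont.tendsto.mono_left (nhdsWithin_mono 0 Ioi_subset_Ici_self)
  refine tendsto_nhdsWithin_iff.2 ⟨hG_tendsto, ?_⟩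
  filter_upwards [Ioc_mem_nhdsGT hFT] with u hu
  obtain ⟨hGu_nonneg, hGu_le⟩ := hG_mem (Ioc_subset_Icc_self hu)
  refine ⟨hGu_nonneg.lt_of_ne fun h => hu.1.ne ?_, hGu_le⟩
  rw [← hFG u (Ioc_subset_Icc_self hu), ← h, hF0]

theorem tendsto_div_sqrt_of_tendsto_div_sq {F G : ℝ → ℝ} {c : ℝ} (hc : 0 < c)
    (hF : Tendsto (fun t => F t / t ^ 2) (𝓝[>] 0) (𝓝 c)) (hG : Tendsto G (𝓝[>] 0) (𝓝[>] 0))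
    (hFG : ∀ᶠ u in 𝓝[>] 0, F (G u) = u) :
    Tendsto (fun u => G u / √u) (𝓝[>] 0) (𝓝 (√c)⁻¹) := by
  have hsq : Tendsto (fun u => G u ^ 2 / u) (𝓝[>] 0) (𝓝 c⁻¹) := by
    refine ((hF.comp hG).inv₀ hc.ne').congr' ?_
    filter_upwards [hFG] with u hu
    simp [hu]
  rw [← Real.sqrt_inv]
  refine (Real.continuous_sqrt.continuousAt.tendsto.comp hsq).congr' ?_
  filter_upwards [hG.eventually self_mem_nhdsWithin] with u hu
  rw [Function.comp_apply, Real.sqrt_div (sq_nonneg _), Real.sqrt_sq (le_of_lt hu)]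

theorem HasDerivWithinAt.tendsto_smul_sub_comp {E α : Type*} [NormedAddCommGroup E]
    [NormedSpace ℝ E] {z : ℝ → E} {v : E} {s : Set ℝ} {x k : ℝ} {l : Filter α} {G r : α → ℝ}
    (hz : HasDerivWithinAt z v s x) (hG : Tendsto G l (𝓝[s \ {x}] x))
    (hr : Tendsto (fun u => r u * (G u - x)) l (𝓝 k)) :
    Tendsto (fun u => r u • (z (G u) - z x)) l (𝓝 (k • v)) := by
  refine (hr.smul ((hasDerivWithinAt_iff_tendsto_slope.mp hz).comp hG)).congr' ?_
  filter_upwards [hG.eventually self_mem_nhdsWithin] with u hu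
  rw [Function.comp_apply, slope_def_module, smul_smul, mul_assoc,
    mul_inv_cancel₀ (sub_ne_zero.2 hu.2), mul_one]

theorem small_time_asymptotics_general {d : ℕ}
    (a : (Fin d → ℝ) → Fin d → Fin d → ℝ) (b : (Fin d → ℝ) → Fin d → ℝ)
    (q : (Fin d → ℝ) → ℝ) (hq : ContDiff ℝ 1 q)
    (T : ℝ) (hT : 0 < T) (y₀ : Fin d → ℝ)
    (z : ℝ → Fin d → ℝ) (hz0 : z 0 = y₀)
    (hz' : ∀ s ∈ Icc (0 : ℝ) T,
      HasDerivWithinAt z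
        (fun i => 2 * (∑ j, a (z s) i j * pd j q (z s)) + q (z s) * b (z s) i)
        (Icc (0 : ℝ) T) s)
    (hq0 : q y₀ = 0)
    (hqz : ∀ s ∈ Ioc (0 : ℝ) T, 0 < q (z s))
    (hhopf : 0 < ∑ i, ∑ j, pd i q y₀ * a y₀ i j * pd j q y₀)
    (F : ℝ → ℝ) (hF : F = fun t => ∫ s in (0 : ℝ)..t, q (z s))
    (G : ℝ → ℝ)
    (hG1 : ∀ t ∈ Icc (0 : ℝ) T, G (F t) = t)
    (hG2 : ∀ u ∈ Icc (0 : ℝ) (F T), F (G u) = u) :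
    Filter.Tendsto (fun t : ℝ => (1 / Real.sqrt t) • (z (G t) - y₀))
      (nhdsWithin 0 (Set.Ioi 0))
      (nhds (fun i => 2 * (∑ j, a y₀ i j * pd j q y₀) /
        Real.sqrt (∑ k, ∑ l, pd k q y₀ * a y₀ k l * pd l q y₀))) := by
  have h0T : (0 : ℝ) ∈ Icc 0 T := ⟨le_rfl, hT.le⟩
  have hqz_cont : ContinuousOn (fun s => q (z s)) (Icc 0 T) :=
    hq.continuous.comp_continuousOn fun s hs => (hz' s hs).continuousWithinAt
  have hqz_deriv : HasDerivWithinAt (fun s => q (z s))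
      (2 * ∑ i, ∑ j, pd i q y₀ * a y₀ i j * pd j q y₀) (Icc 0 T) 0 := by
    have h := ((hq.differentiable one_ne_zero).differentiableAt.hasFDerivAt).comp_hasDerivWithinAt
      0 (hz' 0 h0T)
    rwa [hz0, fderiv_apply_drift_of_eq_zero hq0] at h
  have hF_mono : StrictMonoOn F (Icc 0 T) :=
    hF ▸ strictMonoOn_primitive hT.le hqz_cont fun s hs => hqz s (Ioo_subset_Ioc_self hs)
  have hF0 : F 0 = 0 := by simp [hF]
  have hF_pos : 0 < F T := hF0 ▸ hF_mono h0T ⟨hT.le, le_rfl⟩ hT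
  have hG := tendsto_nhdsWithin_Ioc_of_rightInvOn hT hF0 hF_mono
    (hF ▸ continuousOn_primitive_of_continuousOn hT.le hqz_cont) hG1 hG2
  have hG_sqrt := tendsto_div_sqrt_of_tendsto_div_sq hhopf
    (by simpa [hF] using tendsto_primitive_div_sq hT hqz_cont (by simp [hz0, hq0]) hqz_deriv)
    (hG.mono_right (nhdsWithin_mono _ Ioc_subset_Ioi_self))
    (mem_of_superset (Ioc_mem_nhdsGT hF_pos) fun u hu => hG2 u (Ioc_subset_Icc_self hu))
  rw [← Icc_sdiff_left] at hG
  have h := (hz' 0 h0T).tendsto_smul_sub_comp hG (r := fun u => 1 / √u)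
    (hG_sqrt.congr fun u => by simp [div_eq_inv_mul])
  rw [hz0] at h
  -- the remaining side goal identifies the product and sup-norm topologies on `Fin d → ℝ`
  convert h using 2
  · rfl
  · ext i
    simp [hq0, div_eq_inv_mul]

/-- Small-time asymptotics of the transition-path ODE solution `Ȳ = z ∘ F⁻¹`:
`(Ȳ(t) - y₀)/√t → 2 a(y₀)∇q(y₀) / ⟨∇q(y₀), a(y₀)∇q(y₀)⟩^{1/2}` as `t → 0⁺`. -/
theorem small_time_asymptotics {d : ℕ} (hd : 1 ≤ d)
    (a : (Fin d → ℝ) → Fin d → Fin d → ℝ) (b : (Fin d → ℝ) → Fin d → ℝ)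
    (ha : Continuous a) (hb : Continuous b)
    (q : (Fin d → ℝ) → ℝ) (hq : ContDiff ℝ 1 q)
    (T : ℝ) (hT : 0 < T) (y₀ : Fin d → ℝ)
    (z : ℝ → Fin d → ℝ) (hz0 : z 0 = y₀)
    (hz' : ∀ s ∈ Icc (0 : ℝ) T,
      HasDerivWithinAt z
        (fun i => 2 * (∑ j, a (z s) i j * pd j q (z s)) + q (z s) * b (z s) i)
        (Icc (0 : ℝ) T) s)
    (hq0 : q y₀ = 0)
    (hqz : ∀ s ∈ Ioc (0 : ℝ) T, 0 < q (z s))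
    (hhopf : 0 < ∑ i, ∑ j, pd i q y₀ * a y₀ i j * pd j q y₀)
    (F : ℝ → ℝ) (hF : F = fun t => ∫ s in (0 : ℝ)..t, q (z s))
    (G : ℝ → ℝ)
    (hG1 : ∀ t ∈ Icc (0 : ℝ) T, G (F t) = t)
    (hG2 : ∀ u ∈ Icc (0 : ℝ) (F T), F (G u) = u) :
    Filter.Tendsto (fun t : ℝ => (1 / Real.sqrt t) • (z (G t) - y₀))
      (nhdsWithin 0 (Set.Ioi 0))
      (nhds (fun i => 2 * (∑ j, a y₀ i j * pd j q y₀) /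
        Real.sqrt (∑ k, ∑ l, pd k q y₀ * a y₀ k l * pd l q y₀))) :=
  small_time_asymptotics_general a b q hq T hT y₀ z hz0 hz' hq0 hqz hhopf F hF G hG1 hG2
end
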